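/- Let C be a linear code of length n over R with associated ternary codes C₁, C₂, C₃, so that C = (1+2v²)C₁ ⊕ (2v+2v²)C₂ ⊕ (v+2v²)C₃. Then the Euclidean dual satisfies C^⊥ = (1+2v²)C₁^⊥ ⊕ (2v+2v²)C₂^⊥ ⊕ (v+2v²)C₃^⊥. Furthermore, C is self-dual if and only if C₁, C₂ and C₃ are self-dual ternary codes. -/

import Mathlib

/-- The ring `R = Z₃ + vZ₃ + v²Z₃ = Z₃[v]/(v³ - v)`, with elements written
`a + v*b + v²*c` for `a b c : ZMod 3` (stored as the three coordinates). -/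
@[ext]
structure R3 : Type where
  a : ZMod 3
  b : ZMod 3
  c : ZMod 3
  deriving DecidableEq

namespace R3

instance : Zero R3 := ⟨⟨0, 0, 0⟩⟩
instance : One R3 := ⟨⟨1, 0, 0⟩⟩
instance : Add R3 := ⟨fun x y => ⟨x.a + y.a, x.b + y.b, x.c + y.c⟩⟩
instance : Neg R3 := ⟨fun x => ⟨-x.a, -x.b, -x.c⟩⟩
/-- Multiplication induced by `v³ = v` :
`(a+vb+v²c)(a'+vb'+v²c') = aa' + v(ab'+a'b+bc'+b'c) + v²(ac'+a'c+bb'+cc')`. -/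
instance : Mul R3 := ⟨fun x y =>
  ⟨x.a * y.a,
   x.a * y.b + x.b * y.a + x.b * y.c + x.c * y.b,
   x.a * y.c + x.c * y.a + x.b * y.b + x.c * y.c⟩⟩

@[simp] lemma zero_a : (0 : R3).a = 0 := rfl
@[simp] lemma zero_b : (0 : R3).b = 0 := rfl
@[simp] lemma zero_c : (0 : R3).c = 0 := rfl
@[simp] lemma one_a : (1 : R3).a = 1 := rfl
@[simp] lemma one_b : (1 : R3).b = 0 := rfl
@[simp] lemma one_c : (1 : R3).c = 0 := rfl
@[simp] lemma add_a (x y : R3) : (x + y).a = x.a + y.a := rfl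
@[simp] lemma add_b (x y : R3) : (x + y).b = x.b + y.b := rfl
@[simp] lemma add_c (x y : R3) : (x + y).c = x.c + y.c := rfl
@[simp] lemma neg_a (x : R3) : (-x).a = -x.a := rfl
@[simp] lemma neg_b (x : R3) : (-x).b = -x.b := rfl
@[simp] lemma neg_c (x : R3) : (-x).c = -x.c := rfl
@[simp] lemma mul_a (x y : R3) : (x * y).a = x.a * y.a := rfl
@[simp] lemma mul_b (x y : R3) :
    (x * y).b = x.a * y.b + x.b * y.a + x.b * y.c + x.c * y.b := rfl
@[simp] lemma mul_c (x y : R3) :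
    (x * y).c = x.a * y.c + x.c * y.a + x.b * y.b + x.c * y.c := rfl

private lemma thm_add_assoc (x y z : R3) : x + y + z = x + (y + z) := by ext <;> simp <;> ring
private lemma thm_zero_add (x : R3) : 0 + x = x := by ext <;> simp
private lemma thm_add_zero (x : R3) : x + 0 = x := by ext <;> simp
private lemma thm_add_comm (x y : R3) : x + y = y + x := by ext <;> simp <;> ring
private lemma thm_mul_assoc (x y z : R3) : x * y * z = x * (y * z) := by ext <;> simp <;> ring
private lemma thm_one_mul (x : R3) : 1 * x = x := by ext <;> simp
private lemma thm_mul_one (x : R3) : x * 1 = x := by ext <;> simp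
private lemma thm_left_distrib (x y z : R3) : x * (y + z) = x * y + x * z := by ext <;> simp <;> ring
private lemma thm_right_distrib (x y z : R3) : (x + y) * z = x * z + y * z := by ext <;> simp <;> ring
private lemma thm_mul_comm (x y : R3) : x * y = y * x := by ext <;> simp <;> ring
private lemma thm_zero_mul (x : R3) : 0 * x = 0 := by ext <;> simp
private lemma thm_mul_zero (x : R3) : x * 0 = 0 := by ext <;> simp
private lemma thm_neg_add_cancel (x : R3) : -x + x = 0 := by ext <;> simp

instance : CommRing R3 where
  nsmul m x := ⟨m • x.a, m • x.b, m • x.c⟩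
  nsmul_zero x := R3.ext (zero_nsmul x.a) (zero_nsmul x.b) (zero_nsmul x.c)
  nsmul_succ m x := R3.ext (succ_nsmul x.a m) (succ_nsmul x.b m) (succ_nsmul x.c m)
  zsmul m x := ⟨m • x.a, m • x.b, m • x.c⟩
  zsmul_zero' x := R3.ext (zero_zsmul x.a) (zero_zsmul x.b) (zero_zsmul x.c)
  zsmul_succ' m x := R3.ext (SubNegMonoid.zsmul_succ' m x.a) (SubNegMonoid.zsmul_succ' m x.b)
    (SubNegMonoid.zsmul_succ' m x.c)
  zsmul_neg' m x := R3.ext (SubNegMonoid.zsmul_neg' m x.a) (SubNegMonoid.zsmul_neg' m x.b)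
    (SubNegMonoid.zsmul_neg' m x.c)
  add_assoc := thm_add_assoc
  zero_add := thm_zero_add
  add_zero := thm_add_zero
  add_comm := thm_add_comm
  mul_assoc := thm_mul_assoc
  one_mul := thm_one_mul
  mul_one := thm_mul_one
  left_distrib := thm_left_distrib
  right_distrib := thm_right_distrib
  mul_comm := thm_mul_comm
  zero_mul := thm_zero_mul
  mul_zero := thm_mul_zero
  neg_add_cancel := thm_neg_add_cancel

/-- The element `v` of `R = Z₃[v]/(v³-v)`. -/
def v : R3 := ⟨0, 1, 0⟩

/-- The natural inclusion `Z₃ → R`. -/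
def iota : ZMod 3 →+* R3 where
  toFun t := ⟨t, 0, 0⟩
  map_one' := by ext <;> simp
  map_mul' x y := by ext <;> simp
  map_zero' := by ext <;> simp
  map_add' x y := by ext <;> simp

instance : Algebra (ZMod 3) R3 := iota.toAlgebra

end R3

open R3 in
/-- The Gray map `φ : R → Z₃³`, `φ(a+vb+v²c) = (a, a+b+c, a+2b+c)`. -/
def gray (r : R3) : ZMod 3 × ZMod 3 × ZMod 3 :=
  (r.a, r.a + r.b + r.c, r.a + 2 * r.b + r.c)

/-- The Gray map extended blockwise to `φ : R^n → Z₃^{3n}`, where `Z₃^{3n}` is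
identified with `Z₃^n × Z₃^n × Z₃^n` via the three length-`n` blocks. -/
def grayV {n : ℕ} (r : Fin n → R3) :
    (Fin n → ZMod 3) × (Fin n → ZMod 3) × (Fin n → ZMod 3) :=
  (fun i => (r i).a,
   fun i => (r i).a + (r i).b + (r i).c,
   fun i => (r i).a + 2 * (r i).b + (r i).c)

/-- Hamming weight on `Z₃^{3n} = Z₃^n × Z₃^n × Z₃^n`. -/
def wtH {n : ℕ} (x : (Fin n → ZMod 3) × (Fin n → ZMod 3) × (Fin n → ZMod 3)) : ℕ :=
  hammingNorm x.1 + hammingNorm x.2.1 + hammingNorm x.2.2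

/-- The Lee weight of an element of `R`: the Hamming weight of its Gray image. -/
def wtLee (r : R3) : ℕ :=
  (if r.a ≠ 0 then 1 else 0) + (if r.a + r.b + r.c ≠ 0 then 1 else 0) +
    (if r.a + 2 * r.b + r.c ≠ 0 then 1 else 0)

/-- The Lee weight on `R^n`, extended additively. -/
def wtLeeV {n : ℕ} (x : Fin n → R3) : ℕ := ∑ i, wtLee (x i)

/-- The cyclic shift `σ(c₀,…,c_{n-1}) = (c_{n-1},c₀,…,c_{n-2})`. -/
def cyc {α : Type*} {n : ℕ} [NeZero n] (c : Fin n → α) : Fin n → α :=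
  fun i => c (i - 1)

/-- The negacyclic shift `η(c₀,…,c_{n-1}) = (-c_{n-1},c₀,…,c_{n-2})`. -/
def nega {α : Type*} [Neg α] {n : ℕ} [NeZero n] (c : Fin n → α) : Fin n → α :=
  fun i => if i = 0 then -c (i - 1) else c (i - 1)

/-- The `λ`-constacyclic shift `(c₀,…,c_{n-1}) ↦ (λc_{n-1},c₀,…,c_{n-2})`. -/
def consta {α : Type*} [Mul α] {n : ℕ} [NeZero n] (lam : α) (c : Fin n → α) : Fin n → α :=
  fun i => if i = 0 then lam * c (i - 1) else c (i - 1)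

/-- The quasi-cyclic shift `τ_{s,l}` of block length `l` on vectors of length `n = s*l`,
moving the last block of `l` coordinates to the front; equivalently, the cyclic shift
by `l` positions. -/
def shiftBy {α : Type*} {n : ℕ} [NeZero n] (l : ℕ) (c : Fin n → α) : Fin n → α :=
  fun i => c (i - Fin.ofNat n l)

/-- Apply a map to each of the three blocks of `Z₃^{3n} = Z₃^n × Z₃^n × Z₃^n`. -/
def blockMap {n : ℕ} (f : (Fin n → ZMod 3) → (Fin n → ZMod 3))
    (x : (Fin n → ZMod 3) × (Fin n → ZMod 3) × (Fin n → ZMod 3)) :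
    (Fin n → ZMod 3) × (Fin n → ZMod 3) × (Fin n → ZMod 3) :=
  (f x.1, f x.2.1, f x.2.2)

/-- The Euclidean dual of a linear code over `R`. -/
def dualR {n : ℕ} (C : Submodule R3 (Fin n → R3)) : Submodule R3 (Fin n → R3) where
  carrier := {x | ∀ y ∈ C, ∑ i, x i * y i = 0}
  add_mem' := by
    intro p q hp hq y hy
    simp only [Set.mem_setOf_eq] at *
    simp [Pi.add_apply, add_mul, Finset.sum_add_distrib, hp y hy, hq y hy]
  zero_mem' := by intro y hy; simp
  smul_mem' := by
    intro r p hp y hy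
    simp only [Set.mem_setOf_eq] at *
    simp [Pi.smul_apply, smul_eq_mul, mul_assoc, ← Finset.mul_sum, hp y hy]

/-- The Euclidean dual of a ternary linear code. -/
def dualZ {n : ℕ} (C : Submodule (ZMod 3) (Fin n → ZMod 3)) :
    Submodule (ZMod 3) (Fin n → ZMod 3) where
  carrier := {x | ∀ y ∈ C, ∑ i, x i * y i = 0}
  add_mem' := by
    intro p q hp hq y hy
    simp only [Set.mem_setOf_eq] at *
    simp [Pi.add_apply, add_mul, Finset.sum_add_distrib, hp y hy, hq y hy]
  zero_mem' := by intro y hy; simp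
  smul_mem' := by
    intro r p hp y hy
    simp only [Set.mem_setOf_eq] at *
    simp [Pi.smul_apply, smul_eq_mul, mul_assoc, ← Finset.mul_sum, hp y hy]

/-- The Euclidean inner product on `Z₃^{3n} = Z₃^n × Z₃^n × Z₃^n`. -/
def inner3 {n : ℕ} (x y : (Fin n → ZMod 3) × (Fin n → ZMod 3) × (Fin n → ZMod 3)) : ZMod 3 :=
  ∑ i, x.1 i * y.1 i + ∑ i, x.2.1 i * y.2.1 i + ∑ i, x.2.2 i * y.2.2 i

/-- The Euclidean dual (as a set) of a subset of `Z₃^{3n}`. -/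
def dual3Set {n : ℕ} (S : Set ((Fin n → ZMod 3) × (Fin n → ZMod 3) × (Fin n → ZMod 3))) :
    Set ((Fin n → ZMod 3) × (Fin n → ZMod 3) × (Fin n → ZMod 3)) :=
  {x | ∀ y ∈ S, inner3 x y = 0}

/-- The first associated ternary code `C₁ = {a : ∃ b c, a+vb+v²c ∈ C}`. -/
def assoc1 {n : ℕ} (C : Set (Fin n → R3)) : Set (Fin n → ZMod 3) :=
  {x | ∃ r ∈ C, ∀ i, x i = (r i).a}

/-- The second associated ternary code `C₂ = {a+b+c : a+vb+v²c ∈ C}`. -/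
def assoc2 {n : ℕ} (C : Set (Fin n → R3)) : Set (Fin n → ZMod 3) :=
  {x | ∃ r ∈ C, ∀ i, x i = (r i).a + (r i).b + (r i).c}

/-- The third associated ternary code `C₃ = {a+2b+c : a+vb+v²c ∈ C}`. -/
def assoc3 {n : ℕ} (C : Set (Fin n → R3)) : Set (Fin n → ZMod 3) :=
  {x | ∃ r ∈ C, ∀ i, x i = (r i).a + 2 * (r i).b + (r i).c}

/-- The idempotent `e₁ = 1 + 2v²` of `R`. -/
noncomputable def e1 : R3 := 1 + 2 * R3.v ^ 2
/-- The idempotent `e₂ = 2v + 2v²` of `R`. -/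
noncomputable def e2 : R3 := 2 * R3.v + 2 * R3.v ^ 2
/-- The idempotent `e₃ = v + 2v²` of `R`. -/
noncomputable def e3 : R3 := R3.v + 2 * R3.v ^ 2

/-- Coordinatewise inclusion `Z₃^n → R^n`. -/
def emb {n : ℕ} (x : Fin n → ZMod 3) : Fin n → R3 := fun i => R3.iota (x i)

/-- The code `(1+2v²)C₁ ⊕ (2v+2v²)C₂ ⊕ (v+2v²)C₃ ⊆ R^n` built from three
ternary codes `C₁, C₂, C₃ ⊆ Z₃^n`. -/
def tri {n : ℕ} (C₁ C₂ C₃ : Set (Fin n → ZMod 3)) : Set (Fin n → R3) :=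
  {w | ∃ x ∈ C₁, ∃ y ∈ C₂, ∃ z ∈ C₃, w = e1 • emb x + e2 • emb y + e3 • emb z}

open Polynomial in
/-- The polynomial representation `(c₀,…,c_{n-1}) ↦ c₀ + c₁x + … + c_{n-1}x^{n-1}`
of a vector over `Z₃`. -/
noncomputable def toPolyZ {n : ℕ} (c : Fin n → ZMod 3) : Polynomial (ZMod 3) :=
  ∑ i : Fin n, Polynomial.C (c i) * Polynomial.X ^ (i : ℕ)

open Polynomial in
/-- The polynomial representation of a vector over `R`. -/
noncomputable def toPolyR {n : ℕ} (c : Fin n → R3) : Polynomial R3 :=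
  ∑ i : Fin n, Polynomial.C (c i) * Polynomial.X ^ (i : ℕ)

/-- The quotient map `Z₃[x] → Z₃[x]/(xⁿ - ε)`. -/
noncomputable def mkZ (n : ℕ) (ε : ZMod 3) :
    Polynomial (ZMod 3) →+*
      Polynomial (ZMod 3) ⧸ Ideal.span {Polynomial.X ^ n - Polynomial.C ε} :=
  Ideal.Quotient.mk _

/-- The quotient map `R[x] → R[x]/(xⁿ - ε)`. -/
noncomputable def mkR (n : ℕ) (ε : R3) :
    Polynomial R3 →+* Polynomial R3 ⧸ Ideal.span {Polynomial.X ^ n - Polynomial.C ε} :=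
  Ideal.Quotient.mk _

/-- `f` is the generator polynomial of the ternary cyclic (`ε = 1`) resp. negacyclic
(`ε = -1`) code `D` of length `n`: `f` is a monic divisor of `xⁿ - ε` and, under the
polynomial representation, `D` corresponds exactly to the ideal of `Z₃[x]/(xⁿ - ε)`
generated by `f`. -/
def IsGenPolyZ (n : ℕ) (ε : ZMod 3) (D : Set (Fin n → ZMod 3))
    (f : Polynomial (ZMod 3)) : Prop :=
  f.Monic ∧ f ∣ (Polynomial.X ^ n - Polynomial.C ε) ∧
    {p | ∃ c ∈ D, p = mkZ n ε (toPolyZ c)} = ↑(Ideal.span {mkZ n ε f})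

/-!
Since `v³ - v = v (v - 1) (v + 1)`, the Chinese remainder theorem makes `R` isomorphic to
`Z₃³`; the isomorphism is the Gray map `a + vb + v²c ↦ (a, a + b + c, a + 2b + c)`
(evaluation at `v = 0, 1, -1`), and `e1, e2, e3` are the preimages of the standard
idempotents. Applied coordinatewise, it identifies `R^n` with `Z₃^n × Z₃^n × Z₃^n`, the code
`tri C₁ C₂ C₃` with `C₁ × C₂ × C₃`, and the inner product on `R^n` with the triple of ternary
inner products, so duals and self-duality are computed block by block.
-/

namespace R3

lemma gray_mul (x y : R3) : gray (x * y) = gray x * gray y := by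
  have h3 : (3 : ZMod 3) = 0 := rfl
  simp only [gray, mul_a, mul_b, mul_c, Prod.mk_mul_mk, Prod.mk.injEq, true_and]
  exact ⟨by ring, by linear_combination (-(x.b * y.b)) * h3⟩

lemma sum_idempotents_gray (r : R3) :
    e1 * iota (gray r).1 + e2 * iota (gray r).2.1 + e3 * iota (gray r).2.2 = r := by
  obtain ⟨a, b, c⟩ := r
  revert a b c
  decide

lemma gray_sum_idempotents (p q r : ZMod 3) :
    gray (e1 * iota p + e2 * iota q + e3 * iota r) = (p, q, r) := by
  revert p q r
  decide

noncomputable def grayEquiv : R3 ≃+* ZMod 3 × ZMod 3 × ZMod 3 where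
  toFun := gray
  invFun p := e1 * iota p.1 + e2 * iota p.2.1 + e3 * iota p.2.2
  left_inv := sum_idempotents_gray
  right_inv p := gray_sum_idempotents p.1 p.2.1 p.2.2
  map_mul' := gray_mul
  map_add' x y := by
    simp only [gray, add_a, add_b, add_c, Prod.mk_add_mk, Prod.mk.injEq, true_and]
    exact ⟨by ring, by ring⟩

@[simp] lemma grayEquiv_apply (r : R3) : grayEquiv r = gray r := rfl

end R3

section

variable {n : ℕ}

lemma grayV_sum_idempotents (x y z : Fin n → ZMod 3) :
    grayV (e1 • emb x + e2 • emb y + e3 • emb z) = (x, y, z) := by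
  have h i := R3.gray_sum_idempotents (x i) (y i) (z i)
  simp only [gray, Prod.mk.injEq] at h
  ext i
  exacts [(h i).1, (h i).2.1, (h i).2.2]

noncomputable def grayVEquiv (n : ℕ) :
    (Fin n → R3) ≃ (Fin n → ZMod 3) × (Fin n → ZMod 3) × (Fin n → ZMod 3) where
  toFun := grayV
  invFun t := e1 • emb t.1 + e2 • emb t.2.1 + e3 • emb t.2.2
  left_inv w := funext fun i => R3.sum_idempotents_gray (w i)
  right_inv t := grayV_sum_idempotents t.1 t.2.1 t.2.2

lemma tri_eq_preimage_grayV (S₁ S₂ S₃ : Set (Fin n → ZMod 3)) :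
    tri S₁ S₂ S₃ = grayV ⁻¹' (S₁ ×ˢ S₂ ×ˢ S₃) := by
  ext w
  constructor
  · rintro ⟨x, hx, y, hy, z, hz, rfl⟩
    rw [Set.mem_preimage, grayV_sum_idempotents]
    exact ⟨hx, hy, hz⟩
  · intro hw
    exact ⟨_, hw.1, _, hw.2.1, _, hw.2.2, ((grayVEquiv n).symm_apply_apply w).symm⟩

lemma tri_eq_tri_iff {S₁ S₂ S₃ T₁ T₂ T₃ : Submodule (ZMod 3) (Fin n → ZMod 3)} :
    tri (S₁ : Set (Fin n → ZMod 3)) S₂ S₃ = tri (T₁ : Set (Fin n → ZMod 3)) T₂ T₃ ↔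
      S₁ = T₁ ∧ S₂ = T₂ ∧ S₃ = T₃ := by
  have hsurj : Function.Surjective (grayV : (Fin n → R3) → _) := (grayVEquiv n).surjective
  rw [tri_eq_preimage_grayV, tri_eq_preimage_grayV, (Set.preimage_injective.2 hsurj).eq_iff,
    Set.prod_eq_prod_iff_of_nonempty (S₁.nonempty.prod (S₂.nonempty.prod S₃.nonempty)),
    Set.prod_eq_prod_iff_of_nonempty (S₂.nonempty.prod S₃.nonempty)]
  simp only [SetLike.coe_set_eq]

lemma gray_dotProduct (x y : Fin n → R3) :
    gray (x ⬝ᵥ y) = ((grayV x).1 ⬝ᵥ (grayV y).1, (grayV x).2.1 ⬝ᵥ (grayV y).2.1,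
      (grayV x).2.2 ⬝ᵥ (grayV y).2.2) := by
  change R3.grayEquiv (∑ i, x i * y i) = _
  simp only [map_sum, map_mul, R3.grayEquiv_apply]
  ext <;> simp [Prod.fst_sum, Prod.snd_sum, dotProduct, grayV, gray]

lemma dotProduct_eq_zero_iff_grayV (x y : Fin n → R3) :
    x ⬝ᵥ y = 0 ↔ (grayV x).1 ⬝ᵥ (grayV y).1 = 0 ∧ (grayV x).2.1 ⬝ᵥ (grayV y).2.1 = 0 ∧
      (grayV x).2.2 ⬝ᵥ (grayV y).2.2 = 0 := by
  rw [← map_eq_zero_iff R3.grayEquiv R3.grayEquiv.injective]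
  change gray _ = 0 ↔ _
  rw [gray_dotProduct, Prod.mk_eq_zero, Prod.mk_eq_zero]

lemma coe_dualR_eq_tri_dualZ {C : Submodule R3 (Fin n → R3)}
    {C₁ C₂ C₃ : Submodule (ZMod 3) (Fin n → ZMod 3)}
    (hC : (C : Set (Fin n → R3)) = tri (C₁ : Set (Fin n → ZMod 3)) C₂ C₃) :
    (dualR C : Set (Fin n → R3)) =
      tri (dualZ C₁ : Set (Fin n → ZMod 3)) (dualZ C₂) (dualZ C₃) := by
  have hmem (y : Fin n → R3) :
      y ∈ C ↔ grayV y ∈ (C₁ : Set (Fin n → ZMod 3)) ×ˢ (C₂ : Set _) ×ˢ C₃ := by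
    rw [← SetLike.mem_coe, hC, tri_eq_preimage_grayV, Set.mem_preimage]
  rw [tri_eq_preimage_grayV]
  ext w
  constructor
  · intro hw
    have h (x y z : Fin n → ZMod 3) (hx : x ∈ C₁) (hy : y ∈ C₂) (hz : z ∈ C₃) :=
      (dotProduct_eq_zero_iff_grayV w _).1
        (hw _ ((hmem (e1 • emb x + e2 • emb y + e3 • emb z)).2 (by
          rw [grayV_sum_idempotents]; exact ⟨hx, hy, hz⟩)))
    simp only [grayV_sum_idempotents] at h
    exact ⟨fun x hx => (h x 0 0 hx C₂.zero_mem C₃.zero_mem).1,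
      fun y hy => (h 0 y 0 C₁.zero_mem hy C₃.zero_mem).2.1,
      fun z hz => (h 0 0 z C₁.zero_mem C₂.zero_mem hz).2.2⟩
  · rintro ⟨h₁, h₂, h₃⟩ y hy
    obtain ⟨hy₁, hy₂, hy₃⟩ := (hmem y).1 hy
    exact (dotProduct_eq_zero_iff_grayV w y).2 ⟨h₁ _ hy₁, h₂ _ hy₂, h₃ _ hy₃⟩

end

theorem statement12_general (n : ℕ) (C : Submodule R3 (Fin n → R3))
    (C₁ C₂ C₃ : Submodule (ZMod 3) (Fin n → ZMod 3))
    (hC : (C : Set (Fin n → R3)) = tri (C₁ : Set (Fin n → ZMod 3)) C₂ C₃) :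
    (dualR C : Set (Fin n → R3)) =
      tri (dualZ C₁ : Set (Fin n → ZMod 3)) (dualZ C₂) (dualZ C₃) ∧
    (C = dualR C ↔ (C₁ = dualZ C₁ ∧ C₂ = dualZ C₂ ∧ C₃ = dualZ C₃)) := by
  have hdual := coe_dualR_eq_tri_dualZ hC
  refine ⟨hdual, ?_⟩
  rw [← SetLike.coe_set_eq, hC, hdual, tri_eq_tri_iff]

/-- If `C = (1+2v²)C₁ ⊕ (2v+2v²)C₂ ⊕ (v+2v²)C₃` is a linear code over
`R` with associated ternary codes `C₁, C₂, C₃`, then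
`C^⊥ = (1+2v²)C₁^⊥ ⊕ (2v+2v²)C₂^⊥ ⊕ (v+2v²)C₃^⊥`, and `C` is self-dual iff `C₁`,
`C₂` and `C₃` are self-dual. -/
theorem statement12 (n : ℕ) (C : Submodule R3 (Fin n → R3))
    (C₁ C₂ C₃ : Submodule (ZMod 3) (Fin n → ZMod 3))
    (hA₁ : (C₁ : Set (Fin n → ZMod 3)) = assoc1 (C : Set (Fin n → R3)))
    (hA₂ : (C₂ : Set (Fin n → ZMod 3)) = assoc2 (C : Set (Fin n → R3)))
    (hA₃ : (C₃ : Set (Fin n → ZMod 3)) = assoc3 (C : Set (Fin n → R3)))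
    (hC : (C : Set (Fin n → R3)) = tri (C₁ : Set (Fin n → ZMod 3)) C₂ C₃) :
    (dualR C : Set (Fin n → R3)) =
      tri (dualZ C₁ : Set (Fin n → ZMod 3)) (dualZ C₂) (dualZ C₃) ∧
    (C = dualR C ↔ (C₁ = dualZ C₁ ∧ C₂ = dualZ C₂ ∧ C₃ = dualZ C₃)) :=
  statement12_general n C C₁ C₂ C₃ hC
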